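/- Let X be a measurable space and k a bounded measurable kernel on X. Define the kernel score S_k(P,x) = -∫ k(ω,x) dP(ω) + (1/2)∫∫ k(ω,ω′) dP(ω) dP(ω′) + (1/2) k(x,x) for probability measures P on X and x ∈ X, and S_k(Q,P) = ∫ S_k(Q,x) dP(x). Then 2(S_k(Q,P) - S_k(P,P)) = ‖Φ_k(P) - Φ_k(Q)‖²_{H_k} ≥ 0 for all probability measures P, Q; in particular S_k is a proper scoring rule: S_k(P,P) ≤ S_k(Q,P). -/

import Mathlib

open MeasureTheory
open scoped RealInnerProductSpace

/-- The kernel score associated with the kernel `k`, evaluated at the probability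
measure `R` and the outcome `x`. -/
noncomputable def kernelScore {X : Type*} [MeasurableSpace X]
    (k : X → X → ℝ) (R : MeasureTheory.Measure X) (x : X) : ℝ :=
  -(∫ ω, k ω x ∂ R) + (1 / 2) * (∫ ω, ∫ ω', k ω ω' ∂ R ∂ R) + (1 / 2) * k x x

/-! Writing `k x y = ⟪Φ x, Φ y⟫` and `m R = ∫ Φ ∂ R`, the score is
`S(R, x) = -⟪m R, Φ x⟫ + ‖m R‖² / 2 + ‖Φ x‖² / 2`, so that integrating in `x` against `P`
gives `S(Q, P) - S(P, P) = ‖m P‖² / 2 - ⟪m Q, m P⟫ + ‖m Q‖² / 2 = ‖m P - m Q‖² / 2`;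
the term `∫ ‖Φ‖² ∂P` cancels. -/

section KernelScore

variable {X H : Type*} [MeasurableSpace X]
  [NormedAddCommGroup H] [InnerProductSpace ℝ H] [CompleteSpace H]
  {Φ : X → H} {k : X → X → ℝ} {P R : Measure X}

theorem integral_inner_const_right (hΦ : Integrable Φ R) (v : H) :
    ∫ ω, ⟪Φ ω, v⟫ ∂ R = ⟪∫ ω, Φ ω ∂ R, v⟫ := by
  simp_rw [real_inner_comm v]
  exact integral_inner hΦ v

theorem kernelScore_eq_of_eq_inner (hk : ∀ x y, k x y = ⟪Φ x, Φ y⟫)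
    (hΦ : Integrable Φ R) (x : X) :
    kernelScore k R x
      = -⟪∫ ω, Φ ω ∂ R, Φ x⟫ + 1 / 2 * ‖∫ ω, Φ ω ∂ R‖ ^ 2 + 1 / 2 * ‖Φ x‖ ^ 2 := by
  simp only [kernelScore, hk, integral_inner hΦ, integral_inner_const_right hΦ,
    real_inner_self_eq_norm_sq]

theorem integral_kernelScore_eq_of_eq_inner (hk : ∀ x y, k x y = ⟪Φ x, Φ y⟫)
    (hΦR : Integrable Φ R) [IsProbabilityMeasure P] (hΦP : MemLp Φ 2 P) :
    ∫ x, kernelScore k R x ∂P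
      = -⟪∫ ω, Φ ω ∂ R, ∫ x, Φ x ∂P⟫ + 1 / 2 * ‖∫ ω, Φ ω ∂ R‖ ^ 2
        + 1 / 2 * ∫ x, ‖Φ x‖ ^ 2 ∂P := by
  have hΦP₁ : Integrable Φ P := hΦP.integrable one_le_two
  have hsq : Integrable (fun x ↦ ‖Φ x‖ ^ 2) P := hΦP.integrable_norm_pow two_ne_zero
  simp_rw [kernelScore_eq_of_eq_inner hk hΦR]
  rw [integral_add (by fun_prop) (hsq.const_mul _), integral_add (by fun_prop) (integrable_const _),
    integral_neg, integral_inner hΦP₁, integral_const, integral_const_mul]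
  simp

theorem two_mul_sub_integral_kernelScore_eq_norm_sq (hk : ∀ x y, k x y = ⟪Φ x, Φ y⟫)
    {Q : Measure X} [IsProbabilityMeasure P] (hΦP : MemLp Φ 2 P) (hΦQ : Integrable Φ Q) :
    2 * ((∫ x, kernelScore k Q x ∂P) - ∫ x, kernelScore k P x ∂P)
      = ‖(∫ x, Φ x ∂P) - ∫ x, Φ x ∂Q‖ ^ 2 := by
  rw [integral_kernelScore_eq_of_eq_inner hk hΦQ hΦP,
    integral_kernelScore_eq_of_eq_inner hk (hΦP.integrable one_le_two) hΦP,
    norm_sub_sq_real, real_inner_self_eq_norm_sq, real_inner_comm]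
  ring

end KernelScore

theorem stmt19 {X H : Type*} [MeasurableSpace X]
    [NormedAddCommGroup H] [InnerProductSpace ℝ H] [CompleteSpace H]
    (Φ : X → H) (k : X → X → ℝ)
    (hk : ∀ x y, k x y = ⟪Φ x, Φ y⟫)
    (hΦm : StronglyMeasurable Φ) (C : ℝ) (hC : ∀ x, ‖Φ x‖ ≤ C)
    (P Q : Measure X) [IsProbabilityMeasure P] [IsProbabilityMeasure Q] :
    2 * ((∫ x, kernelScore k Q x ∂P) - ∫ x, kernelScore k P x ∂P)
        = ‖(∫ x, Φ x ∂P) - ∫ x, Φ x ∂Q‖ ^ 2 ∧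
      0 ≤ 2 * ((∫ x, kernelScore k Q x ∂P) - ∫ x, kernelScore k P x ∂P) ∧
      (∫ x, kernelScore k P x ∂P) ≤ ∫ x, kernelScore k Q x ∂P := by
  have hΦ : ∀ (μ : Measure X) [IsFiniteMeasure μ] (p : ENNReal), MemLp Φ p μ := fun μ _ _ ↦
    .of_bound hΦm.aestronglyMeasurable C (.of_forall hC)
  have hscore := two_mul_sub_integral_kernelScore_eq_norm_sq hk (hΦ P 2)
    ((hΦ Q 1).integrable le_rfl)
  have hnonneg : 0 ≤ 2 * ((∫ x, kernelScore k Q x ∂P) - ∫ x, kernelScore k P x ∂P) :=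
    hscore ▸ by positivity
  exact ⟨hscore, hnonneg, by linarith⟩
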